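/- Let d be an odd integer with d ≥ 5. Then every transitive permutation subgroup G of the symmetric group on d elements that contains a (d − 2)-cycle is primitive. -/

import Mathlib

/-!
Let `B` be a nontrivial block. Since `d` is odd, `|B|` and the number `d / |B|` of its
translates are both odd and at least `3`, so `3 ≤ |B| ≤ d / 3`. The `(d - 2)`-cycle `σ` has a
fixed point `a`; the translate `C` of `B` through `a` is then stabilized by `σ`, and since
`|C| ≥ 3` exceeds the two fixed points of `σ`, `C` meets the support of `σ`. Being stabilized by
the cycle `σ`, `C` contains its whole support, so `d - 2 ≤ |C| ≤ d / 3`, which is impossible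
because a cycle moves at least two points.
-/

/-- A subgroup of `Equiv.Perm (Fin d)` is transitive if its natural action on `Fin d`
is transitive. -/
def IsTransitiveSubgroup {d : ℕ} (G : Subgroup (Equiv.Perm (Fin d))) : Prop :=
  ∀ x y : Fin d, ∃ g ∈ G, g x = y

/-- A subgroup of `Equiv.Perm (Fin d)` is primitive if it is transitive and every block
of its natural action on `Fin d` is trivial. -/
def IsPrimitiveSubgroup {d : ℕ} (G : Subgroup (Equiv.Perm (Fin d))) : Prop :=
  IsTransitiveSubgroup G ∧
    ∀ B : Set (Fin d), MulAction.IsBlock G B → MulAction.IsTrivialBlock B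

open scoped Pointwise

namespace Equiv.Perm

variable {α : Type*} [Fintype α] [DecidableEq α]

theorem exists_apply_eq_self_of_card_support_lt {σ : Perm α}
    (h : σ.support.card < Fintype.card α) : ∃ a, σ a = a := by
  obtain ⟨a, -, ha⟩ := Finset.exists_mem_notMem_of_card_lt_card h
  exact ⟨a, notMem_support.mp ha⟩

theorem exists_mem_apply_ne_self_of_card_lt {σ : Perm α} {C : Set α}
    (h : Fintype.card α < C.ncard + σ.support.card) : ∃ x ∈ C, σ x ≠ x := by
  classical
  have hlt : σ.supportᶜ.card < C.toFinset.card := by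
    rw [Finset.card_compl, ← Set.ncard_eq_toFinset_card']
    have := σ.support.card_le_univ
    omega
  obtain ⟨x, hxC, hx⟩ := Finset.exists_mem_notMem_of_card_lt_card hlt
  exact ⟨x, Set.mem_toFinset.mp hxC, mem_support.mp (Finset.notMem_compl.mp hx)⟩

theorem IsCycle.support_subset_of_smul_eq {σ : Perm α} (hσ : σ.IsCycle) {C : Set α}
    (hC : σ • C = C) {x : α} (hxC : x ∈ C) (hx : σ x ≠ x) : (σ.support : Set α) ⊆ C := by
  intro y hy
  obtain ⟨i, rfl⟩ := hσ.sameCycle hx (mem_support.mp hy)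
  have hCi : (σ ^ i) • C = C :=
    MulAction.mem_stabilizer_iff.mp (zpow_mem (MulAction.mem_stabilizer_iff.mpr hC) i)
  rw [← hCi]
  exact Set.smul_mem_smul_set hxC

/-- `σ` stabilizes the translate of `B` through one of its fixed points; that translate is too
large to consist of fixed points, so it contains the whole support of the cycle `σ`. -/
theorem IsCycle.card_support_le_ncard_of_isBlock {G : Subgroup (Perm α)}
    [MulAction.IsPretransitive G α] {σ : Perm α} (hσ : σ.IsCycle) (hσG : σ ∈ G)
    (hσ_fix : σ.support.card < Fintype.card α) {B : Set α} (hB : MulAction.IsBlock G B)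
    (hB_card : Fintype.card α < B.ncard + σ.support.card) :
    σ.support.card ≤ B.ncard := by
  obtain ⟨a, ha⟩ := exists_apply_eq_self_of_card_support_lt hσ_fix
  obtain ⟨b, hb⟩ : B.Nonempty := Set.nonempty_of_ncard_ne_zero (by omega)
  obtain ⟨g, hg⟩ := MulAction.exists_smul_eq G b a
  have haC : a ∈ g • B := ⟨b, hb, hg⟩
  have hC : σ • (g • B) = g • B :=
    (hB.translate g).smul_eq_of_mem (g := ⟨σ, hσG⟩) haC (by simpa [Subgroup.smul_def, ha])
  obtain ⟨x, hxC, hx⟩ := exists_mem_apply_ne_self_of_card_lt (C := g • B)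
    (by rwa [Set.ncard_smul_set])
  calc σ.support.card = (σ.support : Set α).ncard := (Set.ncard_coe_finset _).symm
    _ ≤ (g • B).ncard := Set.ncard_le_ncard (hσ.support_subset_of_smul_eq hC hxC hx)
    _ = B.ncard := Set.ncard_smul_set g B

end Equiv.Perm

theorem MulAction.IsBlock.three_le_ncard_and_three_mul_ncard_le {G X : Type*} [Group G]
    [MulAction G X] [IsPretransitive G X] [Finite X] (hX : Odd (Nat.card X)) {B : Set X}
    (hB : IsBlock G B) (hB_nontriv : ¬ IsTrivialBlock B) :
    3 ≤ B.ncard ∧ 3 * B.ncard ≤ Nat.card X := by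
  rw [IsTrivialBlock, not_or, Set.not_subsingleton_iff] at hB_nontriv
  obtain ⟨hB_nontriv, hB_ne_univ⟩ := hB_nontriv
  have hB_two : 1 < B.ncard := Set.one_lt_ncard_iff_nontrivial.mpr hB_nontriv
  have hB_card := hB.ncard_block_mul_ncard_orbit_eq hB_nontriv.nonempty
  have h_orbit : (orbit G B).ncard ≠ 1 := fun h ↦ hB_ne_univ <|
    Set.eq_of_subset_of_ncard_le (Set.subset_univ B) (by rw [Set.ncard_univ, ← hB_card, h, mul_one])
  obtain ⟨⟨m, hm⟩, ⟨k, hk⟩⟩ := Nat.odd_mul.mp (hB_card ▸ hX)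
  constructor
  · omega
  · rw [← hB_card, mul_comm 3]
    exact Nat.mul_le_mul_left B.ncard (show 3 ≤ (orbit G B).ncard by omega)

theorem IsTransitiveSubgroup.isPretransitive {d : ℕ} {G : Subgroup (Equiv.Perm (Fin d))}
    (hG : IsTransitiveSubgroup G) : MulAction.IsPretransitive G (Fin d) :=
  ⟨fun x y ↦ let ⟨g, hg, hgxy⟩ := hG x y; ⟨⟨g, hg⟩, hgxy⟩⟩

theorem stmt_5_general (d : ℕ) (hodd : Odd d)
    (G : Subgroup (Equiv.Perm (Fin d)))
    (htrans : IsTransitiveSubgroup G)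
    (hcycle : ∃ σ ∈ G, σ.IsCycle ∧ σ.support.card = d - 2) :
    IsPrimitiveSubgroup G := by
  obtain ⟨σ, hσG, hσ, hσ_card⟩ := hcycle
  have := htrans.isPretransitive
  refine ⟨htrans, fun B hB ↦ by_contra fun hB_nontriv ↦ ?_⟩
  have hσ_two := hσ.two_le_card_support
  obtain ⟨hB_three, hB_le⟩ :=
    hB.three_le_ncard_and_three_mul_ncard_le (by rwa [Nat.card_fin]) hB_nontriv
  rw [Nat.card_fin] at hB_le
  have hσ_le := hσ.card_support_le_ncard_of_isBlock hσG (by rw [Fintype.card_fin]; omega) hB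
    (by rw [Fintype.card_fin]; omega)
  omega

theorem stmt_5 (d : ℕ) (hodd : Odd d) (hd : 5 ≤ d)
    (G : Subgroup (Equiv.Perm (Fin d)))
    (htrans : IsTransitiveSubgroup G)
    (hcycle : ∃ σ ∈ G, σ.IsCycle ∧ σ.support.card = d - 2) :
    IsPrimitiveSubgroup G :=
  stmt_5_general d hodd G htrans hcycle
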